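/- arXiv:2605.24477 — 2 statements merged into one kernel-verified Lean document; each statement's English description precedes it below -/
import Mathlib

section
/- Let F : ℝ^N → [0, ∞) be measurable with ∫ F(x) dx = C < ∞. Then the probability distribution with density p*(y) = F(y)/C achieves the minimax regret: min over probability densities q of max over y of [−log q(y) + log F(y)] equals log C, and this minimax value is attained by p*. -/
open MeasureTheory
open scoped ENNReal

/-- Shtarkov's theorem: the normalized maximum likelihood density `p* = F / C`
achieves the minimax regret `log C`, where regret is interpreted as an essential
supremum over the support of `F` (with values in `EReal` to account for
densities vanishing on the support). -/
theorem stmt_5 {N : ℕ} (F : (Fin N → ℝ) → ℝ) (hFmeas : Measurable F)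
    (hF0 : ∀ x, 0 ≤ F x) (C : ℝ) (hC : 0 < C)
    (hFint : Integrable F) (hFC : ∫ x, F x = C) :
    essSup (fun y => ENNReal.log (ENNReal.ofReal (F y) / ENNReal.ofReal (F y / C)))
        (volume.restrict {y | 0 < F y}) = (Real.log C : EReal) ∧
    ∀ q : (Fin N → ℝ) → ℝ, Measurable q → (∀ x, 0 ≤ q x) → (∫ x, q x = 1) →
      (Real.log C : EReal) ≤
        essSup (fun y => ENNReal.log (ENNReal.ofReal (F y) / ENNReal.ofReal (q y)))
          (volume.restrict {y | 0 < F y}) := by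
  set S : Set (Fin N → ℝ) := {y | 0 < F y} with hS
  have hSmeas : MeasurableSet S := measurableSet_lt measurable_const hFmeas
  -- the support has positive measure
  have hS0 : volume S ≠ 0 := by
    intro h0
    have hFz : F =ᵐ[volume] 0 := by
      refine measure_mono_null (fun x hx => ?_) h0
      simp only [Set.mem_setOf_eq, S]
      rcases lt_or_eq_of_le (hF0 x) with h | h
      · exact h
      · exact absurd h.symm hx
    have : ∫ x, F x = 0 := by
      rw [integral_congr_ae hFz]; simp
    rw [hFC] at this
    exact hC.ne' this
  have hrestr0 : volume.restrict S ≠ 0 := by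
    rw [Ne, Measure.restrict_eq_zero]
    exact hS0
  constructor
  · -- the function is a.e. constant `log C` on `S`
    have hae : (fun y => ENNReal.log (ENNReal.ofReal (F y) / ENNReal.ofReal (F y / C)))
        =ᵐ[volume.restrict S] (fun _ => (Real.log C : EReal)) := by
      filter_upwards [ae_restrict_mem hSmeas] with y hy
      have hFy : 0 < F y := hy
      have h1 : ENNReal.ofReal (F y / C) = ENNReal.ofReal (F y) / ENNReal.ofReal C :=
        ENNReal.ofReal_div_of_pos hC
      have hb0 : ENNReal.ofReal (F y) ≠ 0 := by
        simp [ENNReal.ofReal_eq_zero, not_le, hFy]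
      have hbt : ENNReal.ofReal (F y) ≠ ⊤ := ENNReal.ofReal_ne_top
      have hc0 : ENNReal.ofReal C ≠ 0 := by
        simp [ENNReal.ofReal_eq_zero, not_le, hC]
      have h2 : ENNReal.ofReal (F y) / ENNReal.ofReal (F y / C) = ENNReal.ofReal C := by
        have hd0 : ENNReal.ofReal (F y) / ENNReal.ofReal C ≠ 0 := by
          simp [ENNReal.div_eq_zero_iff, hb0, ENNReal.ofReal_ne_top]
        have hdt : ENNReal.ofReal (F y) / ENNReal.ofReal C ≠ ⊤ := by
          simp [ENNReal.div_eq_top, hbt, hc0]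
        rw [h1, eq_comm, ENNReal.eq_div_iff hd0 hdt, ENNReal.div_mul_cancel hc0 ENNReal.ofReal_ne_top]
      rw [h2, ENNReal.log_ofReal_of_pos hC]
    rw [essSup_congr_ae hae, essSup_const _ hrestr0]
  · intro q hqmeas hq0 hqint1
    have hqInt : Integrable q := by
      by_contra h
      rw [integral_undef h] at hqint1
      norm_num at hqint1
    by_contra hle
    push_neg at hle
    set s : EReal := essSup (fun y => ENNReal.log (ENNReal.ofReal (F y) / ENNReal.ofReal (q y)))
      (volume.restrict S) with hs
    have hstop : s < ⊤ := lt_of_lt_of_le hle le_top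
    set K : ℝ≥0∞ := EReal.exp s with hK
    have hKtop : K ≠ ⊤ := by
      rw [hK, Ne, EReal.exp_eq_top_iff]
      exact hstop.ne
    -- a.e. pointwise bound on S
    have haeb : ∀ᵐ y ∂(volume.restrict S),
        ENNReal.log (ENNReal.ofReal (F y) / ENNReal.ofReal (q y)) ≤ s :=
      ae_le_essSup
    have hptw : ∀ᵐ y ∂(volume.restrict S), F y ≤ K.toReal * q y := by
      filter_upwards [haeb, ae_restrict_mem hSmeas] with y hy hyS
      have hFy : 0 < F y := hyS
      have hdiv : ENNReal.ofReal (F y) / ENNReal.ofReal (q y) ≤ K := by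
        rw [hK, ← ENNReal.exp_log (ENNReal.ofReal (F y) / ENNReal.ofReal (q y))]
        exact EReal.exp_monotone hy
      have hmul : ENNReal.ofReal (F y) ≤ K * ENNReal.ofReal (q y) := by
        refine (ENNReal.div_le_iff_le_mul (Or.inr hKtop) (Or.inl ENNReal.ofReal_ne_top)).mp hdiv
      have h2 : K * ENNReal.ofReal (q y) = ENNReal.ofReal (K.toReal * q y) := by
        rw [ENNReal.ofReal_mul ENNReal.toReal_nonneg, ENNReal.ofReal_toReal hKtop]
      rw [h2] at hmul
      exact (ENNReal.ofReal_le_ofReal_iff (mul_nonneg ENNReal.toReal_nonneg (hq0 y))).mp hmul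
    -- integrate the bound
    have hint : ∫ y in S, F y ≤ ∫ y in S, K.toReal * q y := by
      refine integral_mono_ae (hFint.restrict) ((hqInt.restrict).const_mul _) hptw
    have hFS : ∫ y in S, F y = C := by
      rw [setIntegral_eq_integral_of_forall_compl_eq_zero (fun y hy => ?_), hFC]
      have : ¬ 0 < F y := hy
      linarith [hF0 y]
    have hqS : ∫ y in S, q y ≤ 1 := by
      rw [← hqint1]
      exact setIntegral_le_integral hqInt (Filter.Eventually.of_forall hq0)
    have hKC : C ≤ K.toReal := by
      have : ∫ y in S, K.toReal * q y = K.toReal * ∫ y in S, q y := integral_const_mul _ _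
      rw [hFS, this] at hint
      calc C ≤ K.toReal * ∫ y in S, q y := hint
        _ ≤ K.toReal * 1 := by
            exact mul_le_mul_of_nonneg_left hqS ENNReal.toReal_nonneg
        _ = K.toReal := mul_one _
    -- conclude log C ≤ s, contradiction
    have h1 : ENNReal.ofReal C ≤ K := by
      rw [← ENNReal.ofReal_toReal hKtop]
      exact ENNReal.ofReal_le_ofReal hKC
    have h2 : (Real.log C : EReal) ≤ s := by
      rw [← ENNReal.log_ofReal_of_pos hC, ← EReal.log_exp s, ← hK]
      exact ENNReal.log_le_log_iff.mpr h1
    exact absurd h2 (not_le.mpr hle)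
end

section
/- Let q be a probability density on a measurable space, F a nonnegative measurable function with ∫F = C < ∞ and F > 0 on a set of positive measure. Then ess sup_y log(F(y)/q(y)) ≥ log C, with equality if and only if q = F/C almost everywhere on the support of F. -/
open MeasureTheory

/-- Lower-bound half of Shtarkov's minimax regret theorem, with the equality case.
The regret `log (F y / q y)` is interpreted in `EReal` (via `ENNReal.log` of the
ratio in `ℝ≥0∞`), so that a vanishing density `q` on the support of `F` yields
infinite regret. -/
theorem stmt_6 {α : Type*} [MeasurableSpace α] (μ : Measure α)
    (q F : α → ℝ) (hq : Measurable q) (hq0 : ∀ x, 0 ≤ q x) (hq1 : ∫ x, q x ∂μ = 1)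
    (hF : Measurable F) (hF0 : ∀ x, 0 ≤ F x) (hFint : Integrable F μ)
    (C : ℝ) (hFC : ∫ x, F x ∂μ = C) (hpos : 0 < μ {x | 0 < F x}) :
    (Real.log C : EReal) ≤
      essSup (fun y => ENNReal.log (ENNReal.ofReal (F y) / ENNReal.ofReal (q y)))
        (μ.restrict {y | 0 < F y}) ∧
    (essSup (fun y => ENNReal.log (ENNReal.ofReal (F y) / ENNReal.ofReal (q y)))
        (μ.restrict {y | 0 < F y}) = (Real.log C : EReal) ↔
      ∀ᵐ y ∂(μ.restrict {y | 0 < F y}), q y = F y / C) := by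
  set S : Set α := {x | 0 < F x} with hSdef
  have hSmeas : MeasurableSet S := measurableSet_lt measurable_const hF
  set ν := μ.restrict S with hνdef
  set g : α → EReal :=
    fun y => ENNReal.log (ENNReal.ofReal (F y) / ENNReal.ofReal (q y)) with hgdef
  have hsupp : Function.support F = S := by
    ext x
    simp only [Function.mem_support, hSdef, Set.mem_setOf_eq]
    constructor
    · intro h; exact lt_of_le_of_ne (hF0 x) (Ne.symm h)
    · intro h; exact ne_of_gt h
  have hC : 0 < C := by
    rw [← hFC]
    rw [integral_pos_iff_support_of_nonneg hF0 hFint, hsupp]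
    exact hpos
  have hqint : Integrable q μ := by
    by_contra h
    rw [integral_undef h] at hq1; norm_num at hq1
  have hFS : ∫ x in S, F x ∂μ = C := by
    rw [setIntegral_eq_integral_of_forall_compl_eq_zero, hFC]
    intro x hx
    have : ¬ 0 < F x := hx
    linarith [hF0 x, not_lt.mp this]
  have hqS : ∫ x in S, q x ∂μ ≤ 1 := by
    rw [← hq1]
    exact setIntegral_le_integral hqint (Filter.Eventually.of_forall hq0)
  have hνne : NeZero ν := by
    refine ⟨?_⟩
    intro h
    have : ν S = 0 := by rw [h]; simp
    rw [hνdef, Measure.restrict_apply hSmeas, Set.inter_self] at this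
    exact hpos.ne' this
  -- Lemma A: a.e. bound by log C forces q = F / C a.e. on S
  have lemA : (∀ᵐ y ∂ν, g y ≤ (Real.log C : EReal)) →
      ∀ᵐ y ∂ν, q y = F y / C := by
    intro h
    have hge : ∀ᵐ y ∂ν, F y / C ≤ q y := by
      filter_upwards [h, ae_restrict_mem hSmeas] with y hy hyS
      have hFy : 0 < F y := hyS
      rw [hgdef] at hy
      rw [← ENNReal.log_ofReal_of_pos hC, ENNReal.log_le_log_iff] at hy
      have hq0y : 0 < q y := by
        by_contra hqy
        have hq0' : ENNReal.ofReal (q y) = 0 := by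
          rw [ENNReal.ofReal_eq_zero]; exact not_lt.mp hqy
        rw [hq0', ENNReal.div_zero (ENNReal.ofReal_pos.mpr hFy).ne'] at hy
        exact (ENNReal.ofReal_lt_top).not_ge (le_of_eq (top_le_iff.mp hy).symm)
      rw [ENNReal.div_le_iff (ENNReal.ofReal_pos.mpr hq0y).ne'
        ENNReal.ofReal_ne_top, ← ENNReal.ofReal_mul hC.le,
        ENNReal.ofReal_le_ofReal_iff (by positivity)] at hy
      rw [div_le_iff₀' hC]
      exact hy
    have hqνint : Integrable q ν := hqint.restrict
    have hFCint : Integrable (fun y => F y / C) ν := hFint.restrict.div_const C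
    have e1 : ∫ y, F y / C ∂ν = 1 := by
      rw [integral_div, hνdef, hFS]
      field_simp
    have h1 : ∫ y, (q y - F y / C) ∂ν = 0 := by
      have e3 : 0 ≤ ∫ y, (q y - F y / C) ∂ν :=
        integral_nonneg_of_ae (by filter_upwards [hge] with y hy; simp only [Pi.zero_apply]; linarith)
      rw [integral_sub hqνint hFCint, e1] at e3 ⊢
      have : ∫ y, q y ∂ν ≤ 1 := hqS
      linarith
    have := (integral_eq_zero_iff_of_nonneg_ae
      (by filter_upwards [hge] with y hy; simp only [Pi.zero_apply, Pi.sub_apply]; linarith)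
      (hqνint.sub hFCint)).mp h1
    filter_upwards [this] with y hy
    have : q y - F y / C = 0 := hy
    linarith
  -- Lemma B: q = F / C a.e. on S forces g = log C a.e. on S
  have lemB : (∀ᵐ y ∂ν, q y = F y / C) → ∀ᵐ y ∂ν, g y = (Real.log C : EReal) := by
    intro h
    filter_upwards [h, ae_restrict_mem hSmeas] with y hy hyS
    have hFy : 0 < F y := hyS
    have hqy : 0 < q y := by rw [hy]; positivity
    have hmul : F y = C * q y := by rw [hy]; field_simp
    rw [hgdef]
    simp only
    rw [hmul, ENNReal.ofReal_mul hC.le,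
      mul_div_assoc,
      ENNReal.div_self (ENNReal.ofReal_pos.mpr hqy).ne' ENNReal.ofReal_ne_top,
      mul_one, ENNReal.log_ofReal_of_pos hC]
  have key : (Real.log C : EReal) ≤ essSup g ν := by
    by_contra hlt
    push_neg at hlt
    have hle : ∀ᵐ y ∂ν, g y ≤ (Real.log C : EReal) := by
      filter_upwards [ae_le_essSup (f := g) (μ := ν)] with y hy
      exact hy.trans hlt.le
    have heq := lemB (lemA hle)
    rw [essSup_congr_ae heq, essSup_const'] at hlt
    exact lt_irrefl _ hlt
  refine ⟨key, ?_, ?_⟩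
  · intro h
    apply lemA
    filter_upwards [ae_le_essSup (f := g) (μ := ν)] with y hy
    rw [h] at hy
    exact hy
  · intro h
    rw [essSup_congr_ae (lemB h), essSup_const']
end
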